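/- arXiv:1301.6848 — 6 statements merged into one kernel-verified Lean document; each statement's English description precedes it below -/
import Mathlib

section
/- For positive reals x ≠ y, the shifted harmonic mean H_{x,y}(t) = 2/((1/(x+t)) + (1/(y+t))) is a Bernstein function of t on (-min{x,y}, ∞), i.e., it is nonnegative and its derivative is completely monotonic. -/
/-!
Writing `u = t + (x + y) / 2` and `d = (x - y) / 2`, so that `x + t = u + d` and `y + t = u - d`,
the harmonic mean is `u - d ^ 2 / u`. Its derivative `1 + d ^ 2 u⁻²` is a nonnegative constant
plus a nonnegative multiple of `u⁻²`, and `u ↦ u ^ m` is completely monotonic on `u > 0` for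
every integer `m ≤ 0`, since its `n`-th derivative is `m (m - 1) ⋯ (m - n + 1) u ^ (m - n)`.
-/

open Finset Filter Set Topology

theorem iteratedDeriv_zpow_add_const {𝕜 : Type*} [NontriviallyNormedField 𝕜]
    (m : ℤ) (b : 𝕜) (n : ℕ) (t : 𝕜) :
    iteratedDeriv n (fun s => (s + b) ^ m) t
      = (∏ i ∈ range n, ((m : 𝕜) - i)) * (t + b) ^ (m - n) := by
  rw [iteratedDeriv_comp_add_const n (fun s => s ^ m), iteratedDeriv_eq_iterate]
  exact iter_deriv_zpow m (t + b) n

theorem neg_one_pow_mul_iteratedDeriv_zpow_add_const_nonneg {m : ℤ} (hm : m ≤ 0) (n : ℕ)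
    {b t : ℝ} (ht : 0 < t + b) :
    0 ≤ (-1) ^ n * iteratedDeriv n (fun s => (s + b) ^ m) t := by
  have hsign :
      (-1 : ℝ) ^ n * ∏ i ∈ range n, ((m : ℝ) - i) = ∏ i ∈ range n, ((i : ℝ) - m) := by
    rw [← card_range n, ← prod_const, card_range, ← prod_mul_distrib]
    exact prod_congr rfl fun i _ => by ring
  have hm' : (m : ℝ) ≤ 0 := by exact_mod_cast hm
  rw [iteratedDeriv_zpow_add_const, ← mul_assoc, hsign]
  exact mul_nonneg (prod_nonneg fun i _ => by linarith [(i.cast_nonneg : (0 : ℝ) ≤ i)])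
    (zpow_nonneg ht.le _)

theorem neg_one_pow_mul_iteratedDeriv_const_add_mul_zpow_add_const_nonneg {c d : ℝ} (hc : 0 ≤ c)
    (hd : 0 ≤ d) {m : ℤ} (hm : m ≤ 0) (n : ℕ) {b t : ℝ} (ht : 0 < t + b) :
    0 ≤ (-1) ^ n * iteratedDeriv n (fun s => c + d * (s + b) ^ m) t := by
  cases n with
  | zero => simpa using add_nonneg hc (mul_nonneg hd (zpow_nonneg ht.le m))
  | succ n =>
    rw [iteratedDeriv_const_add n.succ_pos, iteratedDeriv_const_mul_field, mul_left_comm]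
    exact mul_nonneg hd (neg_one_pow_mul_iteratedDeriv_zpow_add_const_nonneg hm _ ht)

theorem harmonic_mean_eq {x y t : ℝ} (hxt : 0 < x + t) (hyt : 0 < y + t) :
    2 / (1 / (x + t) + 1 / (y + t))
      = t + (x + y) / 2 - ((x - y) / 2) ^ 2 * (t + (x + y) / 2) ^ (-1 : ℤ) := by
  have hsum : 2 * t + (x + y) ≠ 0 := by linarith
  rw [zpow_neg_one]
  field_simp
  ring

theorem hasDerivAt_harmonic_mean {x y t : ℝ} (hxt : 0 < x + t) (hyt : 0 < y + t) :
    HasDerivAt (fun t => 2 / (1 / (x + t) + 1 / (y + t)))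
      (1 + ((x - y) / 2) ^ 2 * (t + (x + y) / 2) ^ (-2 : ℤ)) t := by
  have hu : t + (x + y) / 2 ≠ 0 := by linarith
  have hinv : HasDerivAt (fun s => (s + (x + y) / 2) ^ (-1 : ℤ))
      (-(t + (x + y) / 2) ^ (-2 : ℤ)) t := by
    simpa using (hasDerivAt_zpow (-1) _ (Or.inl hu)).comp_add_const t ((x + y) / 2)
  have hclosed := ((hasDerivAt_id' t).add_const ((x + y) / 2)).sub
    (hinv.const_mul (((x - y) / 2) ^ 2))
  have hpos : ∀ᶠ s in 𝓝 t, 0 < x + s ∧ 0 < y + s :=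
    (continuousAt_const.eventually_lt (continuous_const_add x).continuousAt hxt).and
      (continuousAt_const.eventually_lt (continuous_const_add y).continuousAt hyt)
  exact (hclosed.congr_of_eventuallyEq (hpos.mono fun s hs => harmonic_mean_eq hs.1 hs.2))
    |>.congr_deriv (by ring)

theorem harmonic_mean_bernstein_general (x y : ℝ) :
    (∀ t ∈ Set.Ioi (-(min x y)), 0 ≤ 2 / (1 / (x + t) + 1 / (y + t))) ∧
    (∀ n : ℕ, ∀ t ∈ Set.Ioi (-(min x y)),
      0 ≤ (-1 : ℝ) ^ n *
        iteratedDeriv n (deriv (fun t : ℝ => 2 / (1 / (x + t) + 1 / (y + t)))) t) := by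
  have hdom : ∀ t ∈ Ioi (-(min x y)), 0 < x + t ∧ 0 < y + t := fun t (ht : _ < t) =>
    ⟨by linarith [min_le_left x y], by linarith [min_le_right x y]⟩
  refine ⟨fun t ht => ?_, fun n t ht => ?_⟩
  · obtain ⟨hxt, hyt⟩ := hdom t ht
    positivity
  · have hderiv : deriv (fun t : ℝ => 2 / (1 / (x + t) + 1 / (y + t))) =ᶠ[𝓝 t]
        fun s => 1 + ((x - y) / 2) ^ 2 * (s + (x + y) / 2) ^ (-2 : ℤ) := by
      filter_upwards [isOpen_Ioi.mem_nhds ht] with s hs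
      exact (hasDerivAt_harmonic_mean (hdom s hs).1 (hdom s hs).2).deriv
    rw [hderiv.iteratedDeriv_eq]
    obtain ⟨hxt, hyt⟩ := hdom t ht
    exact neg_one_pow_mul_iteratedDeriv_const_add_mul_zpow_add_const_nonneg zero_le_one
      (sq_nonneg _) (by norm_num) n (by linarith)

/-- The shifted harmonic mean `H_{x,y}(t) = 2/((1/(x+t)) + (1/(y+t)))` is a Bernstein
function on `(-min x y, ∞)`: nonnegative with completely monotonic derivative. -/
theorem harmonic_mean_bernstein (x y : ℝ) (hx : 0 < x) (hy : 0 < y) (hxy : x ≠ y) :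
    (∀ t ∈ Set.Ioi (-(min x y)), 0 ≤ 2 / (1 / (x + t) + 1 / (y + t))) ∧
    (∀ n : ℕ, ∀ t ∈ Set.Ioi (-(min x y)),
      0 ≤ (-1 : ℝ) ^ n *
        iteratedDeriv n (deriv (fun t : ℝ => 2 / (1 / (x + t) + 1 / (y + t)))) t) :=
  harmonic_mean_bernstein_general x y
end

section
/- For positive reals x ≠ y, the shifted geometric mean G_{x,y}(t) = sqrt((x+t)(y+t)) is a Bernstein function of t on (-min{x,y}, ∞); that is, G_{x,y} is nonnegative and its derivative G_{x,y}'(t) = (x+y+2t)/(2 sqrt((x+t)(y+t))) is completely monotonic. -/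
/-!
Write `G t = √((x + t) * (y + t))`. From `G' = (x + y + 2t) / (2G)` one computes
`G'' = -((x - y)² / 4) (t + x)^(-3/2) (t + y)^(-3/2)`. A shifted power `(t + a)^(-α)` with
`α > 0` is completely monotone, its `n`-th derivative being
`(-1)ⁿ α (α + 1) ⋯ (α + n - 1) (t + a)^(-α-n)`, and by the Leibniz rule a product of smooth
completely monotone functions is completely monotone. Hence `-G''` is completely monotone,
and since `G' ≥ 0` so is `G'`.
-/

open Set
open scoped ContDiff

/-- Derivatives are taken on all of `ℝ`, so this is the usual notion only for open `s`. -/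
def CompletelyMonotoneOn (f : ℝ → ℝ) (s : Set ℝ) : Prop :=
  ∀ n : ℕ, ∀ t ∈ s, 0 ≤ (-1 : ℝ) ^ n * iteratedDeriv n f t

namespace CompletelyMonotoneOn

variable {f g : ℝ → ℝ} {s : Set ℝ}

lemma mono {s' : Set ℝ} (hf : CompletelyMonotoneOn f s) (h : s' ⊆ s) :
    CompletelyMonotoneOn f s' :=
  fun n t ht => hf n t (h ht)

lemma congr (hf : CompletelyMonotoneOn f s) (hs : IsOpen s) (h : EqOn f g s) :
    CompletelyMonotoneOn g s := by
  intro n t ht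
  rw [← h.iteratedDeriv_of_isOpen hs n ht]
  exact hf n t ht

lemma const_mul (hf : CompletelyMonotoneOn f s) {c : ℝ} (hc : 0 ≤ c) :
    CompletelyMonotoneOn (fun t => c * f t) s := by
  intro n t ht
  rw [iteratedDeriv_const_mul_field, mul_left_comm]
  exact mul_nonneg hc (hf n t ht)

lemma mul (hf : CompletelyMonotoneOn f s) (hg : CompletelyMonotoneOn g s) (hs : IsOpen s)
    (hf' : ContDiffOn ℝ ∞ f s) (hg' : ContDiffOn ℝ ∞ g s) :
    CompletelyMonotoneOn (f * g) s := by
  intro n t ht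
  have hn : ((n : ℕ∞) : WithTop ℕ∞) ≤ ∞ := by exact_mod_cast le_top
  rw [iteratedDeriv_mul ((hf'.contDiffAt (hs.mem_nhds ht)).of_le hn)
    ((hg'.contDiffAt (hs.mem_nhds ht)).of_le hn), Finset.mul_sum]
  refine Finset.sum_nonneg fun i hi => ?_
  have hsign : (-1 : ℝ) ^ n = (-1) ^ i * (-1) ^ (n - i) := by
    rw [← pow_add, Nat.add_sub_cancel' (Finset.mem_range_succ_iff.mp hi)]
  calc (0 : ℝ) ≤ n.choose i * (((-1) ^ i * iteratedDeriv i f t) *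
        ((-1) ^ (n - i) * iteratedDeriv (n - i) g t)) :=
        mul_nonneg (Nat.cast_nonneg _) (mul_nonneg (hf i t ht) (hg (n - i) t ht))
    _ = _ := by rw [hsign]; ring

lemma of_neg_deriv (h0 : ∀ t ∈ s, 0 ≤ f t) (hd : CompletelyMonotoneOn (-deriv f) s) :
    CompletelyMonotoneOn f s := by
  rintro (_ | n) t ht
  · simpa using h0 t ht
  · have h := hd n t ht
    rw [iteratedDeriv_neg] at h
    rw [iteratedDeriv_succ', pow_succ]
    linarith

end CompletelyMonotoneOn

lemma completelyMonotoneOn_rpow_neg_add (a : ℝ) {α : ℝ} (hα : 0 < α) :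
    CompletelyMonotoneOn (fun t => (t + a) ^ (-α)) (Ioi (-a)) := by
  intro n t ht
  rw [iteratedDeriv_comp_add_const n (fun t => t ^ (-α)), iteratedDeriv_eq_iterate]
  beta_reduce
  rw [Real.iter_deriv_rpow_const, ← mul_assoc, ← ascPochhammer_eval_neg_eq_descPochhammer,
    neg_neg]
  exact mul_nonneg (ascPochhammer_pos n α hα).le
    (Real.rpow_nonneg (neg_lt_iff_pos_add.mp ht).le _)

lemma contDiffOn_rpow_add (a r : ℝ) {n : WithTop ℕ∞} :
    ContDiffOn ℝ n (fun t => (t + a) ^ r) (Ioi (-a)) :=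
  (contDiffOn_id.add contDiffOn_const).rpow_const_of_ne fun _ ht =>
    (neg_lt_iff_pos_add.mp ht).ne'

section ShiftedGeometricMean

variable {x y t : ℝ}

lemma hasDerivAt_sqrt_mul_add (h : (x + t) * (y + t) ≠ 0) :
    HasDerivAt (fun t => √((x + t) * (y + t)))
      ((x + y + 2 * t) / (2 * √((x + t) * (y + t)))) t := by
  have hprod : HasDerivAt (fun t => (x + t) * (y + t)) (x + y + 2 * t) t := by
    refine (((hasDerivAt_id t).const_add x).mul ((hasDerivAt_id t).const_add y)).congr_deriv ?_
    simp only [id_eq]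
    ring
  refine ((Real.hasDerivAt_sqrt h).comp t hprod).congr_deriv ?_
  field_simp

lemma hasDerivAt_div_sqrt_mul_add (hx : 0 < x + t) (hy : 0 < y + t) :
    HasDerivAt (fun t => (x + y + 2 * t) / (2 * √((x + t) * (y + t))))
      (-((x - y) ^ 2 / 4) * ((t + x) ^ (-(3 / 2 : ℝ)) * (t + y) ^ (-(3 / 2 : ℝ)))) t := by
  have hP : 0 < (x + t) * (y + t) := mul_pos hx hy
  have hsqrt : 0 < √((x + t) * (y + t)) := Real.sqrt_pos.mpr hP
  have hrpow : (t + x) ^ (-(3 / 2 : ℝ)) * (t + y) ^ (-(3 / 2 : ℝ))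
      = ((x + t) * (y + t) * √((x + t) * (y + t)))⁻¹ := by
    rw [← Real.mul_rpow (by linarith) (by linarith), Real.rpow_neg (by nlinarith),
      show (3 / 2 : ℝ) = 1 + 1 / 2 by norm_num, Real.rpow_add (by nlinarith), Real.rpow_one,
      ← Real.sqrt_eq_rpow]
    ring_nf
  have hnum : HasDerivAt (fun t => x + y + 2 * t) 2 t := by
    simpa using ((hasDerivAt_id t).const_mul 2).const_add (x + y)
  refine (hnum.div ((hasDerivAt_sqrt_mul_add hP.ne').const_mul 2) (by positivity)).congr_deriv ?_
  rw [hrpow]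
  field_simp
  rw [Real.sq_sqrt hP.le]
  ring

end ShiftedGeometricMean

theorem geometric_mean_two_bernstein_general (x y : ℝ) :
    (∀ t ∈ Set.Ioi (-(min x y)), 0 ≤ Real.sqrt ((x + t) * (y + t))) ∧
    (∀ t ∈ Set.Ioi (-(min x y)),
      deriv (fun t : ℝ => Real.sqrt ((x + t) * (y + t))) t
        = (x + y + 2 * t) / (2 * Real.sqrt ((x + t) * (y + t)))) ∧
    (∀ n : ℕ, ∀ t ∈ Set.Ioi (-(min x y)),
      0 ≤ (-1 : ℝ) ^ n *
        iteratedDeriv n (deriv (fun t : ℝ => Real.sqrt ((x + t) * (y + t)))) t) := by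
  set s := Ioi (-(min x y))
  have hsx : s ⊆ Ioi (-x) := Ioi_subset_Ioi (neg_le_neg (min_le_left x y))
  have hsy : s ⊆ Ioi (-y) := Ioi_subset_Ioi (neg_le_neg (min_le_right x y))
  have hpos : ∀ t ∈ s, 0 < x + t ∧ 0 < y + t := fun t ht =>
    ⟨neg_lt_iff_pos_add'.mp (hsx ht), neg_lt_iff_pos_add'.mp (hsy ht)⟩
  have hG' : EqOn (deriv fun t => √((x + t) * (y + t)))
      (fun t => (x + y + 2 * t) / (2 * √((x + t) * (y + t)))) s := fun t ht =>
    (hasDerivAt_sqrt_mul_add (mul_pos (hpos t ht).1 (hpos t ht).2).ne').deriv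
  have hG'_nonneg : ∀ t ∈ s, 0 ≤ deriv (fun t => √((x + t) * (y + t))) t := fun t ht => by
    rw [hG' ht]
    exact div_nonneg (by linarith [hpos t ht]) (by positivity)
  have hG'' : EqOn
      (fun t => (x - y) ^ 2 / 4 * ((t + x) ^ (-(3 / 2 : ℝ)) * (t + y) ^ (-(3 / 2 : ℝ))))
      (-deriv (deriv fun t => √((x + t) * (y + t)))) s := fun t ht => by
    rw [Pi.neg_apply, (hG'.eventuallyEq_of_mem (isOpen_Ioi.mem_nhds ht)).deriv_eq,
      (hasDerivAt_div_sqrt_mul_add (hpos t ht).1 (hpos t ht).2).deriv, neg_mul, neg_neg]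
  have hcm :
      CompletelyMonotoneOn (fun t => (t + x) ^ (-(3 / 2 : ℝ)) * (t + y) ^ (-(3 / 2 : ℝ))) s :=
    ((completelyMonotoneOn_rpow_neg_add x (by norm_num)).mono hsx).mul
      ((completelyMonotoneOn_rpow_neg_add y (by norm_num)).mono hsy) isOpen_Ioi
      ((contDiffOn_rpow_add x _).mono hsx) ((contDiffOn_rpow_add y _).mono hsy)
  exact ⟨fun t _ => Real.sqrt_nonneg _, hG', CompletelyMonotoneOn.of_neg_deriv hG'_nonneg
    ((hcm.const_mul (by positivity)).congr isOpen_Ioi hG'')⟩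

/-- The shifted geometric mean `G_{x,y}(t) = sqrt((x+t)(y+t))` is a Bernstein function on
`(-min x y, ∞)`: it is nonnegative, its derivative is `(x+y+2t)/(2 sqrt((x+t)(y+t)))`, and
this derivative is completely monotonic. -/
theorem geometric_mean_two_bernstein (x y : ℝ) (hx : 0 < x) (hy : 0 < y) (hxy : x ≠ y) :
    (∀ t ∈ Set.Ioi (-(min x y)), 0 ≤ Real.sqrt ((x + t) * (y + t))) ∧
    (∀ t ∈ Set.Ioi (-(min x y)),
      deriv (fun t : ℝ => Real.sqrt ((x + t) * (y + t))) t
        = (x + y + 2 * t) / (2 * Real.sqrt ((x + t) * (y + t)))) ∧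
    (∀ n : ℕ, ∀ t ∈ Set.Ioi (-(min x y)),
      0 ≤ (-1 : ℝ) ^ n *
        iteratedDeriv n (deriv (fun t : ℝ => Real.sqrt ((x + t) * (y + t)))) t) :=
  geometric_mean_two_bernstein_general x y
end

section
/- Let a_1, …, a_n be positive real numbers. Then the limit as real z → ∞ of G_n(a+z) - z equals A_n(a), where G_n(a+z) = (∏_{k=1}^n (a_k + z))^{1/n} and A_n(a) = (1/n) ∑_{k=1}^n a_k. -/
/-!
Substituting `t = z⁻¹`, `G_n(a + z) - z = (f t - f 0) / t` with
`f t = (∏ k, (1 + a k * t)) ^ (1 / n)`, so the limit is `f' 0 = (∑ k, a k) / n`.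
-/

open Filter Topology Finset

theorem hasDerivAt_prod_one_add_mul_zero {ι : Type*} (s : Finset ι) (a : ι → ℝ) :
    HasDerivAt (fun t : ℝ => ∏ k ∈ s, (1 + a k * t)) (∑ k ∈ s, a k) 0 := by
  classical
  have h := HasDerivAt.fun_finsetProd (u := s) (x := (0 : ℝ))
    (fun k _ => ((hasDerivAt_id (0 : ℝ)).const_mul (a k)).const_add 1)
  simpa using h

theorem hasDerivAt_prod_one_add_mul_rpow_zero {ι : Type*} (s : Finset ι) (a : ι → ℝ) (p : ℝ) :
    HasDerivAt (fun t : ℝ => (∏ k ∈ s, (1 + a k * t)) ^ p) ((∑ k ∈ s, a k) * p) 0 := by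
  have h := (hasDerivAt_prod_one_add_mul_zero s a).rpow_const (p := p) (by simp)
  simpa using h

theorem HasDerivAt.tendsto_mul_sub_inv_atTop {f : ℝ → ℝ} {f' : ℝ} (h : HasDerivAt f f' 0) :
    Tendsto (fun z : ℝ => z * (f z⁻¹ - f 0)) atTop (𝓝 f') := by
  simpa [Function.comp_def] using h.tendsto_slope_zero_right.comp tendsto_inv_atTop_nhdsGT_zero

theorem prod_add_eq_pow_card_mul_prod_one_add_mul {ι : Type*} (s : Finset ι) (a : ι → ℝ)
    {z : ℝ} (hz : z ≠ 0) : ∏ k ∈ s, (a k + z) = z ^ #s * ∏ k ∈ s, (1 + a k * z⁻¹) := by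
  rw [← prod_const, ← prod_mul_distrib]
  refine prod_congr rfl fun k _ => ?_
  field_simp
  ring

theorem prod_add_rpow_inv_card {ι : Type*} {s : Finset ι} (hs : s.Nonempty) (a : ι → ℝ)
    {z : ℝ} (hz : 0 < z) (ha : ∀ k ∈ s, 0 ≤ a k + z) :
    (∏ k ∈ s, (a k + z)) ^ (#s : ℝ)⁻¹ = z * (∏ k ∈ s, (1 + a k * z⁻¹)) ^ (#s : ℝ)⁻¹ := by
  have hprod : 0 ≤ ∏ k ∈ s, (1 + a k * z⁻¹) := prod_nonneg fun k hk => by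
    have hk' : 1 + a k * z⁻¹ = (a k + z) / z := by field_simp; ring
    exact hk' ▸ div_nonneg (ha k hk) hz.le
  rw [prod_add_eq_pow_card_mul_prod_one_add_mul s a hz.ne', Real.mul_rpow (by positivity) hprod,
    Real.pow_rpow_inv_natCast hz.le hs.card_pos.ne']

theorem tendsto_prod_add_rpow_inv_card_sub_atTop {ι : Type*} [Fintype ι] [Nonempty ι]
    (a : ι → ℝ) :
    Tendsto (fun z : ℝ => (∏ k, (a k + z)) ^ (Fintype.card ι : ℝ)⁻¹ - z) atTop
      (𝓝 ((∑ k, a k) / Fintype.card ι)) := by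
  have hlim := (hasDerivAt_prod_one_add_mul_rpow_zero univ a (Fintype.card ι : ℝ)⁻¹)
    |>.tendsto_mul_sub_inv_atTop
  rw [← div_eq_mul_inv] at hlim
  refine hlim.congr' ?_
  have hshift : ∀ᶠ z in atTop, ∀ k, 0 ≤ a k + z :=
    eventually_all.2 fun k => (eventually_ge_atTop (-a k)).mono fun z hz => by linarith
  filter_upwards [eventually_gt_atTop 0, hshift] with z hz hshift
  rw [← card_univ, prod_add_rpow_inv_card univ_nonempty a hz fun k _ => hshift k]
  simp [mul_sub]

theorem geometric_mean_shift_limit_general (n : ℕ) (hn : 0 < n) (a : Fin n → ℝ) :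
    Filter.Tendsto (fun z : ℝ => (∏ k, (a k + z)) ^ ((n : ℝ)⁻¹) - z)
      Filter.atTop (nhds ((∑ k, a k) / n)) := by
  have : Nonempty (Fin n) := ⟨⟨0, hn⟩⟩
  simpa using tendsto_prod_add_rpow_inv_card_sub_atTop a

/-- For positive reals `a_1, …, a_n`, `G_n(a+z) - z → A_n(a)` as real `z → ∞`, where
`G_n(a+z) = (∏ (a_k + z))^{1/n}` and `A_n(a) = (∑ a_k)/n`. -/
theorem geometric_mean_shift_limit (n : ℕ) (hn : 0 < n) (a : Fin n → ℝ)
    (ha : ∀ k, 0 < a k) :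
    Filter.Tendsto (fun z : ℝ => (∏ k, (a k + z)) ^ ((n : ℝ)⁻¹) - z)
      Filter.atTop (nhds ((∑ k, a k) / n)) :=
  geometric_mean_shift_limit_general n hn a
end

section
/- Let a_1 ≤ … ≤ a_n be positive reals with a_1 = 0 allowed after shifting; define for complex z ∉ (-∞,0] the function h_n(z) = exp((1/n) ∑_{k=1}^n Log(b_k + z)) - z, where b_k = a_k - a_1 ≥ 0 (so b_1 = 0). Then for real t > 0 with t ∈ (b_ℓ, b_{ℓ+1}) for some 1 ≤ ℓ ≤ n-1, the limit as ε → 0^+ of the imaginary part Im h_n(-t + iε) equals (∏_{k=1}^n |b_k - t|)^{1/n} · sin(ℓπ/n), and for t ≥ b_n this limit equals 0. -/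
/-!
Approaching the cut from above, `log (b_k - t + iε)` tends to `log |b_k - t| + iπ` when `b_k < t`
and to `log (b_k - t)` when `b_k > t`. Hence the exponent tends to
`(1/n) ∑ log |b_k - t| + iπ ℓ / n`, where `ℓ = #{k | b_k < t}`, whose exponential has imaginary part
`(∏ |b_k - t|)^{1/n} sin (ℓπ/n)`; the subtracted `-t + iε` only contributes `ε → 0`. For `t > b_n`
we have `ℓ = n` and the sine vanishes. For `t = b_n` one factor vanishes, and the modulus
`(∏ |b_k - t + iε|)^{1/n}` of the exponential tends to `0`.
-/

open Filter Finset Complex Topology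
open scoped Real

lemma tendsto_ofReal_add_mul_I (x : ℝ) :
    Tendsto (fun ε : ℝ => (x : ℂ) + ε * I) (𝓝[>] 0) (𝓝 x) := by
  have h : Continuous (fun ε : ℝ => (x : ℂ) + ε * I) := by fun_prop
  simpa using (h.tendsto 0).mono_left nhdsWithin_le_nhds

lemma tendsto_log_ofReal_add_mul_I_of_neg {x : ℝ} (hx : x < 0) :
    Tendsto (fun ε : ℝ => log (x + ε * I)) (𝓝[>] 0) (𝓝 (Real.log |x| + π * I)) := by
  have h_upper : Tendsto (fun ε : ℝ => (x : ℂ) + ε * I) (𝓝[>] 0) (𝓝[{z | 0 ≤ z.im}] x) := by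
    refine tendsto_nhdsWithin_iff.2 ⟨tendsto_ofReal_add_mul_I x, ?_⟩
    filter_upwards [self_mem_nhdsWithin] with ε (hε : 0 < ε)
    simpa using hε.le
  simpa [Function.comp_def] using
    (tendsto_log_nhdsWithin_im_nonneg_of_re_neg_of_im_zero (by simpa using hx) (by simp)).comp
      h_upper

lemma tendsto_log_ofReal_add_mul_I_of_pos {x : ℝ} (hx : 0 < x) :
    Tendsto (fun ε : ℝ => log (x + ε * I)) (𝓝[>] 0) (𝓝 (Real.log |x|)) := by
  have hc : ContinuousAt log x := continuousAt_clog (by simp [mem_slitPlane_iff, hx])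
  simpa [← ofReal_log hx.le, abs_of_pos hx, Function.comp_def] using
    hc.tendsto.comp (tendsto_ofReal_add_mul_I x)

section Finset

variable {ι : Type*} {s : Finset ι}

lemma tendsto_sum_log_ofReal_add_mul_I {c : ι → ℝ} (hc : ∀ k ∈ s, c k ≠ 0) :
    Tendsto (fun ε : ℝ => ∑ k ∈ s, log (c k + ε * I)) (𝓝[>] 0)
      (𝓝 ((∑ k ∈ s, Real.log |c k| : ℝ) + #{k ∈ s | c k < 0} * π * I)) := by
  have h : ∀ k ∈ s, Tendsto (fun ε : ℝ => log (c k + ε * I)) (𝓝[>] 0)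
      (𝓝 (Real.log |c k| + if c k < 0 then π * I else 0)) := by
    intro k hk
    rcases (hc k hk).lt_or_gt with hneg | hpos
    · simpa [hneg] using tendsto_log_ofReal_add_mul_I_of_neg hneg
    · simpa [hpos.not_gt] using tendsto_log_ofReal_add_mul_I_of_pos hpos
  convert tendsto_finsetSum s h using 2
  rw [sum_add_distrib, ← sum_filter, sum_const, nsmul_eq_mul]
  push_cast
  ring

lemma Real.exp_mul_sum_log {f : ι → ℝ} (hf : ∀ k ∈ s, 0 < f k) (a : ℝ) :
    Real.exp (a * ∑ k ∈ s, Real.log (f k)) = (∏ k ∈ s, f k) ^ a := by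
  rw [← Real.log_prod fun k hk => (hf k hk).ne', Real.rpow_def_of_pos (prod_pos hf), mul_comm]

lemma norm_exp_mul_sum_log {z : ι → ℂ} (hz : ∀ k ∈ s, z k ≠ 0) (a : ℝ) :
    ‖exp (a * ∑ k ∈ s, log (z k))‖ = (∏ k ∈ s, ‖z k‖) ^ a := by
  rw [norm_exp, re_ofReal_mul, re_sum]
  simp_rw [log_re]
  exact Real.exp_mul_sum_log (fun k hk => norm_pos_iff.2 (hz k hk)) a

lemma im_exp_ofReal_mul (a x θ : ℝ) :
    (exp (a * (x + θ * I))).im = Real.exp (a * x) * Real.sin (a * θ) := by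
  rw [exp_im]
  simp

lemma tendsto_im_exp_mul_sum_log_ofReal_add_mul_I {c : ι → ℝ} (hc : ∀ k ∈ s, c k ≠ 0) (a : ℝ) :
    Tendsto (fun ε : ℝ => (exp (a * ∑ k ∈ s, log (c k + ε * I))).im) (𝓝[>] 0)
      (𝓝 ((∏ k ∈ s, |c k|) ^ a * Real.sin (a * (#{k ∈ s | c k < 0} * π)))) := by
  have h := (continuous_im.tendsto _).comp ((continuous_exp.tendsto _).comp
    ((tendsto_sum_log_ofReal_add_mul_I hc).const_mul (a : ℂ)))
  rwa [← ofReal_natCast, ← ofReal_mul, im_exp_ofReal_mul,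
    Real.exp_mul_sum_log fun k hk => abs_pos.2 (hc k hk)] at h

lemma tendsto_exp_mul_sum_log_ofReal_add_mul_I_of_eq_zero {c : ι → ℝ} {k₀ : ι} (hk₀ : k₀ ∈ s)
    (hc : c k₀ = 0) {a : ℝ} (ha : 0 < a) :
    Tendsto (fun ε : ℝ => exp (a * ∑ k ∈ s, log (c k + ε * I))) (𝓝[>] 0) (𝓝 0) := by
  rw [tendsto_zero_iff_norm_tendsto_zero]
  have h_norm : ∀ᶠ ε : ℝ in 𝓝[>] 0, ‖exp (a * ∑ k ∈ s, log (c k + ε * I))‖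
      = (∏ k ∈ s, ‖(c k : ℂ) + ε * I‖) ^ a := by
    filter_upwards [self_mem_nhdsWithin] with ε (hε : 0 < ε)
    refine norm_exp_mul_sum_log (fun k _ h0 => hε.ne' ?_) a
    simpa using congrArg im h0
  have h_prod : Tendsto (fun ε : ℝ => (∏ k ∈ s, ‖(c k : ℂ) + ε * I‖) ^ a) (𝓝[>] 0)
      (𝓝 ((∏ k ∈ s, ‖(c k : ℂ)‖) ^ a)) :=
    (Real.continuousAt_rpow_const _ _ (Or.inr ha.le)).tendsto.comp <|
      tendsto_finsetProd _ fun k _ => (continuous_norm.tendsto _).comp (tendsto_ofReal_add_mul_I _)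
  rw [prod_eq_zero hk₀ (by simp [hc]), Real.zero_rpow ha.ne'] at h_prod
  exact h_prod.congr' (h_norm.mono fun _ h => h.symm)

end Finset

lemma filter_neg_eq_Icc {c : ℕ → ℝ} {n m : ℕ} (hm : m ≤ n)
    (hneg : ∀ k ∈ Icc 1 n, k ≤ m → c k < 0) (hpos : ∀ k ∈ Icc 1 n, m < k → 0 < c k) :
    {k ∈ Icc 1 n | c k < 0} = Icc 1 m := by
  ext k
  simp only [mem_filter, mem_Icc]
  constructor
  · rintro ⟨hk, hck⟩
    exact ⟨hk.1, not_lt.1 fun hmk => (hpos k (mem_Icc.2 hk) hmk).not_gt hck⟩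
  · rintro ⟨h1, hkm⟩
    exact ⟨⟨h1, hkm.trans hm⟩, hneg k (mem_Icc.2 ⟨h1, hkm.trans hm⟩) hkm⟩

lemma tendsto_im_exp_inv_mul_sum_log_of_sign_change {c : ℕ → ℝ} {n m : ℕ} (hm : m ≤ n)
    (hneg : ∀ k ∈ Icc 1 n, k ≤ m → c k < 0) (hpos : ∀ k ∈ Icc 1 n, m < k → 0 < c k) :
    Tendsto (fun ε : ℝ => (exp ((n : ℝ)⁻¹ * ∑ k ∈ Icc 1 n, log (c k + ε * I))).im) (𝓝[>] 0)
      (𝓝 ((∏ k ∈ Icc 1 n, |c k|) ^ (n : ℝ)⁻¹ * Real.sin (m * π / n))) := by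
  have hc : ∀ k ∈ Icc 1 n, c k ≠ 0 := fun k hk =>
    (le_or_gt k m).elim (fun h => (hneg k hk h).ne) fun h => (hpos k hk h).ne'
  have h := tendsto_im_exp_mul_sum_log_ofReal_add_mul_I hc (n : ℝ)⁻¹
  rwa [filter_neg_eq_Icc hm hneg hpos, Nat.card_Icc, Nat.add_sub_cancel, inv_mul_eq_div] at h

lemma tendsto_im_exp_inv_mul_sum_log_sub_of_tendsto {n : ℕ} {b : ℕ → ℝ} {t L : ℝ}
    (h : Tendsto (fun ε : ℝ =>
      (exp ((n : ℝ)⁻¹ * ∑ k ∈ Icc 1 n, log ((b k - t : ℝ) + ε * I))).im) (𝓝[>] 0) (𝓝 L)) :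
    Tendsto (fun ε : ℝ =>
      (exp ((n : ℂ)⁻¹ * ∑ k ∈ Icc 1 n, log ((b k : ℂ) + (-(t : ℂ) + ε * I)))
        - (-(t : ℂ) + ε * I)).im) (𝓝[>] 0) (𝓝 L) := by
  have h_im := h.sub (tendsto_id.mono_left nhdsWithin_le_nhds)
  rw [sub_zero] at h_im
  refine h_im.congr fun ε => ?_
  simp [sub_eq_add_neg, add_assoc]

theorem boundary_imaginary_part_general (n : ℕ) (hn : 0 < n) (b : ℕ → ℝ)
    (hmono : ∀ k ∈ Finset.Icc 1 (n - 1), b k ≤ b (k + 1)) :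
    (∀ ℓ ∈ Finset.Icc 1 (n - 1), ∀ t ∈ Set.Ioo (b ℓ) (b (ℓ + 1)), 0 < t →
      Filter.Tendsto
        (fun ε : ℝ =>
          (Complex.exp ((n : ℂ)⁻¹ *
              ∑ k ∈ Finset.Icc 1 n, Complex.log ((b k : ℂ) + (-(t : ℂ) + ε * Complex.I)))
            - (-(t : ℂ) + ε * Complex.I)).im)
        (nhdsWithin 0 (Set.Ioi 0))
        (nhds ((∏ k ∈ Finset.Icc 1 n, |b k - t|) ^ ((n : ℝ)⁻¹) *
          Real.sin (ℓ * Real.pi / n)))) ∧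
    (∀ t : ℝ, 0 < t → b n ≤ t →
      Filter.Tendsto
        (fun ε : ℝ =>
          (Complex.exp ((n : ℂ)⁻¹ *
              ∑ k ∈ Finset.Icc 1 n, Complex.log ((b k : ℂ) + (-(t : ℂ) + ε * Complex.I)))
            - (-(t : ℂ) + ε * Complex.I)).im)
        (nhdsWithin 0 (Set.Ioi 0)) (nhds 0)) := by
  have hb : MonotoneOn b (Icc 1 n : Finset ℕ) := by
    rw [coe_Icc]
    exact monotoneOn_of_le_add_one Set.ordConnected_Icc fun k _ hk hk1 =>
      hmono k (by simp only [Set.mem_Icc, mem_Icc] at *; omega)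
  have hn_mem : n ∈ Icc 1 n := mem_Icc.2 ⟨hn, le_rfl⟩
  refine ⟨fun ℓ hℓ t ⟨hℓt, htℓ⟩ _ => ?_, fun t _ hbt => ?_⟩
  · have hℓ_mem : ℓ ∈ Icc 1 n := by simp only [mem_Icc] at hℓ ⊢; omega
    have hℓ1_mem : ℓ + 1 ∈ Icc 1 n := by simp only [mem_Icc] at hℓ ⊢; omega
    refine tendsto_im_exp_inv_mul_sum_log_sub_of_tendsto <|
      tendsto_im_exp_inv_mul_sum_log_of_sign_change (mem_Icc.1 hℓ_mem).2
        (fun k hk hkℓ => ?_) fun k hk hℓk => ?_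
    · linarith [hb hk hℓ_mem hkℓ]
    · linarith [hb hℓ1_mem hk hℓk]
  rcases hbt.lt_or_eq with hlt | rfl
  · have h := tendsto_im_exp_inv_mul_sum_log_of_sign_change (c := (b · - t)) le_rfl
      (fun k hk _ => by linarith [hb hk hn_mem (mem_Icc.1 hk).2])
      fun k hk hnk => absurd (mem_Icc.1 hk).2 hnk.not_ge
    rw [mul_div_cancel_left₀ _ (Nat.cast_ne_zero.2 hn.ne'), Real.sin_pi, mul_zero] at h
    exact tendsto_im_exp_inv_mul_sum_log_sub_of_tendsto h
  · have h := tendsto_exp_mul_sum_log_ofReal_add_mul_I_of_eq_zero (c := (b · - b n)) hn_mem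
      (sub_self _) (inv_pos.2 (Nat.cast_pos.2 hn))
    simpa using tendsto_im_exp_inv_mul_sum_log_sub_of_tendsto ((continuous_im.tendsto 0).comp h)

/-- Boundary imaginary part of `h_n(z) = exp((1/n) ∑ Log(b_k + z)) - z` along the cut:
for `t ∈ (b_ℓ, b_{ℓ+1})`, `Im h_n(-t+iε) → (∏ |b_k - t|)^{1/n} sin(ℓπ/n)` as `ε → 0⁺`,
and for `t ≥ b_n` (with `t > 0`) the limit is `0`. -/
theorem boundary_imaginary_part (n : ℕ) (hn : 0 < n) (b : ℕ → ℝ) (hb1 : b 1 = 0)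
    (hnn : ∀ k ∈ Finset.Icc 1 n, 0 ≤ b k)
    (hmono : ∀ k ∈ Finset.Icc 1 (n - 1), b k ≤ b (k + 1)) :
    (∀ ℓ ∈ Finset.Icc 1 (n - 1), ∀ t ∈ Set.Ioo (b ℓ) (b (ℓ + 1)), 0 < t →
      Filter.Tendsto
        (fun ε : ℝ =>
          (Complex.exp ((n : ℂ)⁻¹ *
              ∑ k ∈ Finset.Icc 1 n, Complex.log ((b k : ℂ) + (-(t : ℂ) + ε * Complex.I)))
            - (-(t : ℂ) + ε * Complex.I)).im)
        (nhdsWithin 0 (Set.Ioi 0))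
        (nhds ((∏ k ∈ Finset.Icc 1 n, |b k - t|) ^ ((n : ℝ)⁻¹) *
          Real.sin (ℓ * Real.pi / n)))) ∧
    (∀ t : ℝ, 0 < t → b n ≤ t →
      Filter.Tendsto
        (fun ε : ℝ =>
          (Complex.exp ((n : ℂ)⁻¹ *
              ∑ k ∈ Finset.Icc 1 n, Complex.log ((b k : ℂ) + (-(t : ℂ) + ε * Complex.I)))
            - (-(t : ℂ) + ε * Complex.I)).im)
        (nhdsWithin 0 (Set.Ioi 0)) (nhds 0)) :=
  boundary_imaginary_part_general n hn b hmono
end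

section
/- Let f: (0,∞) → (0,∞) be a Bernstein function (f ≥ 0 with f' completely monotonic). Then 1/f is completely monotonic on (0,∞); in fact, (-1)^k (log(1/f))^{(k)}(t) ≥ 0 for all k ≥ 1 and t > 0, i.e., 1/f is logarithmically completely monotonic. -/
open Set

namespace RecipBernstein

noncomputable abbrev S : Set ℝ := Set.Ioi 0

lemma hS : IsOpen S := isOpen_Ioi
lemma hSu : UniqueDiffOn ℝ S := hS.uniqueDiffOn

/-- iteratedDerivWithin on an open set agrees with iteratedDeriv. -/
lemma idw_eq_id (n : ℕ) (f : ℝ → ℝ) {x : ℝ} (hx : x ∈ S) :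
    iteratedDerivWithin n f S x = iteratedDeriv n f x := by
  rw [iteratedDerivWithin, iteratedDeriv,
    iteratedFDerivWithin_of_isOpen (f := f) (𝕜 := ℝ) n hS hx]

/-- Truncated complete monotonicity: products. -/
lemma cm_mul : ∀ (N : ℕ) (u v : ℝ → ℝ), ContDiffOn ℝ (⊤ : ℕ∞) u S → ContDiffOn ℝ (⊤ : ℕ∞) v S →
    (∀ n ≤ N, ∀ x ∈ S, 0 ≤ (-1 : ℝ) ^ n * iteratedDerivWithin n u S x) →
    (∀ n ≤ N, ∀ x ∈ S, 0 ≤ (-1 : ℝ) ^ n * iteratedDerivWithin n v S x) →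
    ∀ n ≤ N, ∀ x ∈ S, 0 ≤ (-1 : ℝ) ^ n * iteratedDerivWithin n (fun t => u t * v t) S x := by
  intro N
  induction N with
  | zero =>
    intro u v hu hv hmu hmv n hn x hx
    interval_cases n
    simpa [iteratedDerivWithin_zero] using
      mul_nonneg (by simpa using hmu 0 le_rfl x hx) (by simpa using hmv 0 le_rfl x hx)
  | succ N IH =>
    intro u v hu hv hmu hmv n hn x hx
    match n with
    | 0 =>
      simpa [iteratedDerivWithin_zero] using
        mul_nonneg (by simpa using hmu 0 (by omega) x hx) (by simpa using hmv 0 (by omega) x hx)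
    | (m + 1) =>
      have hm : m ≤ N := by omega
      set u1 : ℝ → ℝ := fun t => -derivWithin u S t with hu1def
      set v1 : ℝ → ℝ := fun t => -derivWithin v S t with hv1def
      have hu' : ContDiffOn ℝ (⊤ : ℕ∞) (derivWithin u S) S := hu.derivWithin hSu (mod_cast le_top)
      have hv' : ContDiffOn ℝ (⊤ : ℕ∞) (derivWithin v S) S := hv.derivWithin hSu (mod_cast le_top)
      have hu1 : ContDiffOn ℝ (⊤ : ℕ∞) u1 S := hu'.neg
      have hv1 : ContDiffOn ℝ (⊤ : ℕ∞) v1 S := hv'.neg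
      -- sign conditions for u1, v1
      have hmu1 : ∀ n ≤ N, ∀ x ∈ S, 0 ≤ (-1 : ℝ) ^ n * iteratedDerivWithin n u1 S x := by
        intro n hn x hx
        rw [hu1def, iteratedDerivWithin_fun_neg, ← iteratedDerivWithin_succ']
        have := hmu (n + 1) (by omega) x hx
        calc (0:ℝ) ≤ (-1) ^ (n+1) * iteratedDerivWithin (n+1) u S x := this
          _ = (-1) ^ n * -iteratedDerivWithin (n + 1) u S x := by ring
      have hmv1 : ∀ n ≤ N, ∀ x ∈ S, 0 ≤ (-1 : ℝ) ^ n * iteratedDerivWithin n v1 S x := by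
        intro n hn x hx
        rw [hv1def, iteratedDerivWithin_fun_neg, ← iteratedDerivWithin_succ']
        have := hmv (n + 1) (by omega) x hx
        calc (0:ℝ) ≤ (-1) ^ (n+1) * iteratedDerivWithin (n+1) v S x := this
          _ = (-1) ^ n * -iteratedDerivWithin (n + 1) v S x := by ring
      have hmuN : ∀ n ≤ N, ∀ x ∈ S, 0 ≤ (-1 : ℝ) ^ n * iteratedDerivWithin n u S x :=
        fun n hn x hx => hmu n (by omega) x hx
      have hmvN : ∀ n ≤ N, ∀ x ∈ S, 0 ≤ (-1 : ℝ) ^ n * iteratedDerivWithin n v S x :=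
        fun n hn x hx => hmv n (by omega) x hx
      -- derivative of the product on S
      have hder : Set.EqOn (derivWithin (fun t => u t * v t) S)
          (fun t => -(u1 t * v t + u t * v1 t)) S := by
        intro y hy
        have hud : DifferentiableWithinAt ℝ u S y :=
          (hu.differentiableOn (by simp)) y hy
        have hvd : DifferentiableWithinAt ℝ v S y :=
          (hv.differentiableOn (by simp)) y hy
        rw [derivWithin_fun_mul hud hvd]
        simp only [hu1def, hv1def]
        ring
      have hsplit : (fun t => u1 t * v t + u t * v1 t)
          = (fun t => u1 t * v t) + (fun t => u t * v1 t) := rfl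
      rw [iteratedDerivWithin_succ',
        iteratedDerivWithin_congr hder hx,
        iteratedDerivWithin_fun_neg, hsplit,
        iteratedDerivWithin_add hx hSu
          (((hu1.mul hv).of_le (mod_cast le_top)) x hx) (((hu.mul hv1).of_le (mod_cast le_top)) x hx)]
      have h1 := IH u1 v hu1 hv hmu1 hmvN m hm x hx
      have h2 := IH u v1 hu hv1 hmuN hmv1 m hm x hx
      calc (0:ℝ) ≤ (-1) ^ m * iteratedDerivWithin m (fun t => u1 t * v t) S x
            + (-1) ^ m * iteratedDerivWithin m (fun t => u t * v1 t) S x := add_nonneg h1 h2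
        _ = (-1) ^ (m+1) * -(iteratedDerivWithin m (fun t => u1 t * v t) S x
            + iteratedDerivWithin m (fun t => u t * v1 t) S x) := by ring

end RecipBernstein

/-- The reciprocal of a positive Bernstein function on `(0,∞)` is (logarithmically)
completely monotonic: `1/f` is completely monotonic and
`(-1)^k (log(1/f))^{(k)} ≥ 0` for all `k ≥ 1`. -/
theorem reciprocal_bernstein_lcm (f : ℝ → ℝ) (hf : ContDiff ℝ (⊤ : ℕ∞) f)
    (hpos : ∀ t > (0 : ℝ), 0 < f t)
    (hcm : ∀ n : ℕ, ∀ t > (0 : ℝ), 0 ≤ (-1 : ℝ) ^ n * iteratedDeriv n (deriv f) t) :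
    (∀ n : ℕ, ∀ t > (0 : ℝ),
      0 ≤ (-1 : ℝ) ^ n * iteratedDeriv n (fun t => (f t)⁻¹) t) ∧
    (∀ k : ℕ, 1 ≤ k → ∀ t > (0 : ℝ),
      0 ≤ (-1 : ℝ) ^ k * iteratedDeriv k (fun t => Real.log ((f t)⁻¹)) t) := by
  open RecipBernstein in
  classical
  have hfS : ContDiffOn ℝ (⊤ : ℕ∞) f S := hf.contDiffOn
  have hne : ∀ x ∈ S, f x ≠ 0 := fun x hx => (hpos x hx).ne'
  set g : ℝ → ℝ := fun t => (f t)⁻¹ with hgdef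
  have hg : ContDiffOn ℝ (⊤ : ℕ∞) g S := hfS.inv hne
  have hF' : ContDiffOn ℝ (⊤ : ℕ∞) (derivWithin f S) S := hfS.derivWithin hSu (mod_cast le_top)
  -- sign condition for derivWithin f S (= deriv f on S)
  have hcmW : ∀ n, ∀ x ∈ S, 0 ≤ (-1 : ℝ) ^ n * iteratedDerivWithin n (derivWithin f S) S x := by
    intro n x hx
    have he : Set.EqOn (derivWithin f S) (deriv f) S := fun y hy =>
      derivWithin_of_isOpen hS hy
    rw [iteratedDerivWithin_congr he hx, idw_eq_id]
    · exact hcm n x hx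
    · exact hx
  -- main complete monotonicity of g, truncated induction
  have hgcm : ∀ N, ∀ n ≤ N, ∀ x ∈ S, 0 ≤ (-1 : ℝ) ^ n * iteratedDerivWithin n g S x := by
    intro N
    induction N with
    | zero =>
      intro n hn x hx
      interval_cases n
      simpa [iteratedDerivWithin_zero, hgdef] using (inv_nonneg.mpr (hpos x hx).le)
    | succ N IH =>
      intro n hn x hx
      match n with
      | 0 => simpa [iteratedDerivWithin_zero, hgdef] using (inv_nonneg.mpr (hpos x hx).le)
      | (m + 1) =>
        have hm : m ≤ N := by omega
        -- derivWithin g S = -(F' * (g*g)) on S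
        have hder : Set.EqOn (derivWithin g S)
            (fun t => -(derivWithin f S t * (g t * g t))) S := by
          intro y hy
          have hfd : DifferentiableWithinAt ℝ f S y := (hfS.differentiableOn (by simp)) y hy
          simp only [hgdef]
          rw [derivWithin_fun_inv' hfd (hne y hy)]
          rw [div_eq_mul_inv, pow_two, mul_inv]
          ring
        have hprod : ∀ n ≤ N, ∀ x ∈ S, 0 ≤ (-1:ℝ)^n *
            iteratedDerivWithin n (fun t => derivWithin f S t * (g t * g t)) S x := by
          refine cm_mul N (derivWithin f S) (fun t => g t * g t) hF' (hg.mul hg)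
            (fun n hn x hx => hcmW n x hx) ?_
          exact cm_mul N g g hg hg IH IH
        rw [iteratedDerivWithin_succ',
          iteratedDerivWithin_congr hder hx,
          iteratedDerivWithin_fun_neg]
        have := hprod m hm x hx
        calc (0:ℝ) ≤ (-1)^m * iteratedDerivWithin m
              (fun t => derivWithin f S t * (g t * g t)) S x := this
          _ = (-1)^(m+1) * -iteratedDerivWithin m
              (fun t => derivWithin f S t * (g t * g t)) S x := by ring
  have hgcm' : ∀ n, ∀ x ∈ S, 0 ≤ (-1 : ℝ) ^ n * iteratedDerivWithin n g S x :=
    fun n x hx => hgcm n n le_rfl x hx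
  constructor
  · intro n t ht
    rw [← idw_eq_id n _ ht]
    exact hgcm' n t ht
  · intro k hk t ht
    set h : ℝ → ℝ := fun t => Real.log ((f t)⁻¹) with hhdef
    have hhS : ContDiffOn ℝ (⊤ : ℕ∞) h S := by
      refine ContDiffOn.log hg ?_
      intro x hx
      exact inv_ne_zero (hne x hx)
    match k, hk with
    | (m + 1), _ =>
      -- derivWithin h S = -(F' * g) on S
      have ht' : t ∈ S := ht
      have hder : Set.EqOn (derivWithin h S) (fun t => -(derivWithin f S t * g t)) S := by
        intro y hy
        have hfd : DifferentiableWithinAt ℝ f S y := (hfS.differentiableOn (by simp)) y hy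
        have hlog : HasDerivWithinAt (fun t => Real.log (f t))
            ((f y)⁻¹ * derivWithin f S y) S y :=
          (Real.hasDerivAt_log (hne y hy)).comp_hasDerivWithinAt y hfd.hasDerivWithinAt
        have hhe : h = fun t => -Real.log (f t) := by
          funext z; rw [hhdef]; exact Real.log_inv _
        have hneg : HasDerivWithinAt h (-((f y)⁻¹ * derivWithin f S y)) S y := by
          rw [hhe]; exact hlog.neg
        rw [hneg.derivWithin (hSu y hy)]
        simp only [hgdef]
        ring
      rw [← idw_eq_id (m+1) h ht', iteratedDerivWithin_succ',
        iteratedDerivWithin_congr hder ht',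
        iteratedDerivWithin_fun_neg]
      have hprod : 0 ≤ (-1:ℝ)^m *
          iteratedDerivWithin m (fun t => derivWithin f S t * g t) S t := by
        refine cm_mul m (derivWithin f S) g hF' hg
          (fun n hn x hx => hcmW n x hx) (fun n hn x hx => hgcm' n x hx) m le_rfl t ht'
      calc (0:ℝ) ≤ (-1)^m * iteratedDerivWithin m
            (fun t => derivWithin f S t * g t) S t := hprod
        _ = (-1)^(m+1) * -iteratedDerivWithin m
            (fun t => derivWithin f S t * g t) S t := by ring
end

section
/- Every logarithmically completely monotonic function on an interval I ⊆ (0,∞) is completely monotonic on I: if g > 0 and (-1)^k (log g)^{(k)}(t) ≥ 0 for all k ≥ 1 and t ∈ I, then (-1)^n g^{(n)}(t) ≥ 0 for all n ≥ 0 and t ∈ I. -/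
open Set Finset

private lemma iteratedDerivWithin_of_isOpen' {f : ℝ → ℝ} {s : Set ℝ} (n : ℕ) (hs : IsOpen s)
    {x : ℝ} (hx : x ∈ s) : iteratedDerivWithin n f s x = iteratedDeriv n f x := by
  rw [iteratedDerivWithin_eq_iteratedFDerivWithin, iteratedDeriv_eq_iteratedFDeriv,
    iteratedFDerivWithin_of_isOpen n hs hx]

/-- Pascal-style recombination identity used in the Leibniz formula. -/
private lemma pascal_comb (F G : ℕ → ℝ) (n : ℕ) :
    (∑ j ∈ Finset.range (n + 1), (n.choose j : ℝ) * F (j + 1) * G (n - j))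
      + (∑ j ∈ Finset.range (n + 1), (n.choose j : ℝ) * F j * G (n - j + 1))
      = ∑ j ∈ Finset.range (n + 2), ((n + 1).choose j : ℝ) * F j * G (n + 1 - j) := by
  rw [Finset.sum_range_succ' (fun j => ((n + 1).choose j : ℝ) * F j * G (n + 1 - j)) (n + 1),
      Finset.sum_range_succ' (fun j => (n.choose j : ℝ) * F j * G (n - j + 1)) n]
  have h1 : ∑ j ∈ Finset.range (n + 1),
        ((n + 1).choose (j + 1) : ℝ) * F (j + 1) * G (n + 1 - (j + 1))
      = ∑ j ∈ Finset.range (n + 1),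
          ((n.choose j : ℝ) * F (j + 1) * G (n - j)
            + (n.choose (j + 1) : ℝ) * F (j + 1) * G (n - j)) := by
    refine Finset.sum_congr rfl fun j hj => ?_
    have e : n + 1 - (j + 1) = n - j := by omega
    rw [e, Nat.choose_succ_succ, Nat.cast_add]; ring
  have h2 : ∑ j ∈ Finset.range n, (n.choose (j + 1) : ℝ) * F (j + 1) * G (n - (j + 1) + 1)
      = ∑ j ∈ Finset.range (n + 1), (n.choose (j + 1) : ℝ) * F (j + 1) * G (n - j) := by
    rw [Finset.sum_range_succ, Nat.choose_succ_self]
    simp only [Nat.cast_zero, zero_mul, add_zero]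
    refine Finset.sum_congr rfl fun j hj => ?_
    have hj' := Finset.mem_range.mp hj
    have e : n - (j + 1) + 1 = n - j := by omega
    rw [e]
  rw [h1, Finset.sum_add_distrib, h2]
  simp only [Nat.choose_zero_right, Nat.cast_one, Nat.sub_zero]
  ring

/-- Leibniz formula for iterated derivatives of a product, at points of an open set where
both factors are smooth. -/
private lemma leibniz_on (U : Set ℝ) (hU : IsOpen U) (n : ℕ) :
    ∀ f g : ℝ → ℝ, ContDiffOn ℝ (⊤ : ℕ∞) f U → ContDiffOn ℝ (⊤ : ℕ∞) g U → ∀ t ∈ U,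
      iteratedDeriv n (fun x => f x * g x) t =
        ∑ j ∈ Finset.range (n + 1),
          (n.choose j : ℝ) * iteratedDeriv j f t * iteratedDeriv (n - j) g t := by
  induction n with
  | zero => intro f g hf hg t ht; simp
  | succ n IH =>
    intro f g hf hg t ht
    have hUD : UniqueDiffOn ℝ U := hU.uniqueDiffOn
    have hf' : ContDiffOn ℝ (⊤ : ℕ∞) (deriv f) U := hf.deriv_of_isOpen hU (by simp)
    have hg' : ContDiffOn ℝ (⊤ : ℕ∞) (deriv g) U := hg.deriv_of_isOpen hU (by simp)
    have key : Set.EqOn (deriv (fun x => f x * g x))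
        (fun x => deriv f x * g x + f x * deriv g x) U := by
      intro x hx
      have hfx : DifferentiableAt ℝ f x :=
        (hf.contDiffAt (hU.mem_nhds hx)).differentiableAt (by simp)
      have hgx : DifferentiableAt ℝ g x :=
        (hg.contDiffAt (hU.mem_nhds hx)).differentiableAt (by simp)
      exact deriv_fun_mul hfx hgx
    rw [iteratedDeriv_succ', key.iteratedDeriv_of_isOpen hU n ht]
    have hA : ContDiffOn ℝ (⊤ : ℕ∞) (fun x => deriv f x * g x) U := hf'.mul hg
    have hB : ContDiffOn ℝ (⊤ : ℕ∞) (fun x => f x * deriv g x) U := hf.mul hg'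
    have split : iteratedDeriv n (fun x => deriv f x * g x + f x * deriv g x) t
        = iteratedDeriv n (fun x => deriv f x * g x) t
          + iteratedDeriv n (fun x => f x * deriv g x) t := by
      rw [← iteratedDerivWithin_of_isOpen' n hU ht, ← iteratedDerivWithin_of_isOpen' n hU ht,
        ← iteratedDerivWithin_of_isOpen' n hU ht]
      exact iteratedDerivWithin_add ht hUD ((hA.of_le (by exact_mod_cast le_top)) t ht) ((hB.of_le (by exact_mod_cast le_top)) t ht)
    rw [split, IH (deriv f) g hf' hg t ht, IH f (deriv g) hf hg' t ht]
    have e1 : ∑ j ∈ Finset.range (n + 1),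
        (n.choose j : ℝ) * iteratedDeriv j (deriv f) t * iteratedDeriv (n - j) g t
        = ∑ j ∈ Finset.range (n + 1),
        (n.choose j : ℝ) * iteratedDeriv (j + 1) f t * iteratedDeriv (n - j) g t := by
      refine Finset.sum_congr rfl fun j _ => ?_
      rw [iteratedDeriv_succ']
    have e2 : ∑ j ∈ Finset.range (n + 1),
        (n.choose j : ℝ) * iteratedDeriv j f t * iteratedDeriv (n - j) (deriv g) t
        = ∑ j ∈ Finset.range (n + 1),
        (n.choose j : ℝ) * iteratedDeriv j f t * iteratedDeriv (n - j + 1) g t := by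
      refine Finset.sum_congr rfl fun j _ => ?_
      rw [iteratedDeriv_succ']
    rw [e1, e2]
    exact pascal_comb (fun j => iteratedDeriv j f t) (fun j => iteratedDeriv j g t) n

/-- Every logarithmically completely monotonic function on an interval `I ⊆ (0,∞)` is
completely monotonic on `I`. -/
theorem lcm_implies_cm (I : Set ℝ) (hI : I ⊆ Set.Ioi 0) (hord : I.OrdConnected)
    (g : ℝ → ℝ) (hg : ContDiff ℝ (⊤ : ℕ∞) g) (hpos : ∀ t ∈ I, 0 < g t)
    (hlcm : ∀ k : ℕ, 1 ≤ k → ∀ t ∈ I,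
      0 ≤ (-1 : ℝ) ^ k * iteratedDeriv k (fun t => Real.log (g t)) t) :
    ∀ n : ℕ, ∀ t ∈ I, 0 ≤ (-1 : ℝ) ^ n * iteratedDeriv n g t := by
  intro n
  induction n using Nat.strong_induction_on with
  | _ n IH =>
    match n with
    | 0 =>
      intro t ht
      simpa using (hpos t ht).le
    | n + 1 =>
      intro t ht
      set U : Set ℝ := g ⁻¹' Set.Ioi 0 with hUdef
      have hUopen : IsOpen U := isOpen_Ioi.preimage hg.continuous
      have htU : t ∈ U := hpos t ht
      have hgU : ContDiffOn ℝ (⊤ : ℕ∞) g U := hg.contDiffOn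
      have hne : ∀ x ∈ U, g x ≠ 0 := fun x hx => ne_of_gt hx
      have hh : ContDiffOn ℝ (⊤ : ℕ∞) (fun x => Real.log (g x)) U := hgU.log hne
      have hh' : ContDiffOn ℝ (⊤ : ℕ∞) (deriv (fun x => Real.log (g x))) U :=
        hh.deriv_of_isOpen hUopen (by simp)
      have key : Set.EqOn (deriv g)
          (fun x => deriv (fun y => Real.log (g y)) x * g x) U := by
        intro x hx
        have hgx : DifferentiableAt ℝ g x := (hg.differentiable (by simp)) x
        have hlog : HasDerivAt (fun y => Real.log (g y)) (deriv g x / g x) x :=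
          (hgx.hasDerivAt).log (hne x hx)
        have hd : deriv (fun y => Real.log (g y)) x = deriv g x / g x := hlog.deriv
        simp only [hd]
        rw [div_mul_cancel₀ _ (hne x hx)]
      rw [iteratedDeriv_succ', key.iteratedDeriv_of_isOpen hUopen n htU,
        leibniz_on U hUopen n _ g hh' hgU t htU, Finset.mul_sum]
      refine Finset.sum_nonneg fun j hj => ?_
      have hj' : j ≤ n := Nat.lt_succ_iff.mp (Finset.mem_range.mp hj)
      have hsign : (-1 : ℝ) ^ (n + 1)
          * ((n.choose j : ℝ) * iteratedDeriv j (deriv fun y => Real.log (g y)) t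
              * iteratedDeriv (n - j) g t)
          = (n.choose j : ℝ)
            * ((-1 : ℝ) ^ (j + 1) * iteratedDeriv (j + 1) (fun y => Real.log (g y)) t)
            * ((-1 : ℝ) ^ (n - j) * iteratedDeriv (n - j) g t) := by
        rw [← iteratedDeriv_succ', show n + 1 = (j + 1) + (n - j) by omega, pow_add]
        ring
      rw [hsign]
      have h1 : 0 ≤ (-1 : ℝ) ^ (j + 1) * iteratedDeriv (j + 1) (fun y => Real.log (g y)) t :=
        hlcm (j + 1) (by omega) t ht
      have h2 : 0 ≤ (-1 : ℝ) ^ (n - j) * iteratedDeriv (n - j) g t :=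
        IH (n - j) (by omega) t ht
      positivity
end
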